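/- Let S = N_out^T·N_in − P for a k-regular graph G, and let z be an eigenvector of the adjacency matrix A with eigenvalue λ. Then y = N_out^T·z satisfies S²y − λ·S·y + (k−1)·y = 0. -/

import Mathlib

open Matrix Polynomial

variable {V : Type*} [Fintype V] [DecidableEq V]

/-- Head incidence matrix of the symmetric digraph: entry (v, d) is 1 iff v is the head of d. -/
def Nin (G : SimpleGraph V) : Matrix V G.Dart ℝ :=
  Matrix.of fun v d => if d.snd = v then 1 else 0

/-- Tail incidence matrix: entry (v, d) is 1 iff v is the tail of d. -/
def Nout (G : SimpleGraph V) : Matrix V G.Dart ℝ :=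
  Matrix.of fun v d => if d.fst = v then 1 else 0

/-- Arc-reversal permutation matrix. -/
def Prev (G : SimpleGraph V) : Matrix G.Dart G.Dart ℝ :=
  Matrix.of fun d e => if e = d.symm then 1 else 0

/-- Positive support of a matrix. -/
noncomputable def posSupport {m n : Type*} (M : Matrix m n ℝ) : Matrix m n ℝ :=
  Matrix.of fun i j => if 0 < M i j then 1 else 0

/-!
Write y = N_outᵀ z. The incidence matrices satisfy N_in N_outᵀ = A,
N_in N_inᵀ = k·I (regularity), P N_outᵀ = N_inᵀ and P N_inᵀ = N_outᵀ. Hence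
S y = λ y − N_inᵀ z and S (N_inᵀ z) = (k − 1) y, so applying S to the first identity
gives S² y = λ S y − (k − 1) y.
-/

open Finset in
theorem SimpleGraph.dart_snd_fiber_card_eq_degree (G : SimpleGraph V) [DecidableRel G.Adj]
    (v : V) : #{d : G.Dart | d.snd = v} = G.degree v := by
  rw [← dart_fst_fiber_card_eq_degree]
  exact card_bij' (fun d _ => d.symm) (fun d _ => d.symm) (by simp) (by simp) (by simp) (by simp)

section Incidence

open SimpleGraph

variable (G : SimpleGraph V) [DecidableRel G.Adj]

theorem Nin_mul_Nout_transpose : Nin G * (Nout G)ᵀ = G.adjMatrix ℝ := by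
  ext v u
  have hsum : (Nin G * (Nout G)ᵀ) v u = ∑ d : G.Dart, if d.toProd = (u, v) then 1 else 0 := by
    simp only [Nin, Nout, mul_apply, transpose_apply, of_apply, ite_mul, one_mul, zero_mul,
      Prod.ext_iff]
    exact Finset.sum_congr rfl fun d _ => by by_cases d.snd = v <;> simp [*, and_comm]
  rw [hsum, adjMatrix_apply]
  by_cases h : G.Adj u v
  · have hdart (d : G.Dart) : d.toProd = (u, v) ↔ d = ⟨(u, v), h⟩ :=
      (Dart.ext_iff d ⟨(u, v), h⟩).symm
    simp_rw [hdart, Finset.sum_ite_eq', Finset.mem_univ, if_true, if_pos h.symm]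
  · rw [if_neg (fun h' => h h'.symm)]
    exact Finset.sum_eq_zero fun d _ =>
      if_neg fun hd : d.toProd = (u, v) => h (by simpa [hd] using d.adj)

theorem Nin_mul_Nin_transpose : Nin G * (Nin G)ᵀ = diagonal fun v => (G.degree v : ℝ) := by
  ext v w
  simp only [Nin, mul_apply, transpose_apply, of_apply, ite_mul, one_mul, zero_mul,
    diagonal_apply]
  split_ifs with hvw
  · subst hvw
    simp only [← ite_and, and_self, Finset.sum_boole, dart_snd_fiber_card_eq_degree]
  · exact Finset.sum_eq_zero fun d _ => by split_ifs <;> simp_all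

theorem Nin_mul_Nin_transpose_of_isRegularOfDegree {k : ℕ} (hreg : G.IsRegularOfDegree k) :
    Nin G * (Nin G)ᵀ = (k : ℝ) • 1 := by
  rw [Nin_mul_Nin_transpose, smul_one_eq_diagonal]
  simp only [hreg.degree_eq]

theorem Prev_mul_Nin_transpose : Prev G * (Nin G)ᵀ = (Nout G)ᵀ := by
  ext d v
  simp only [Prev, Nin, Nout, mul_apply, transpose_apply, of_apply, ite_mul, one_mul, zero_mul,
    Finset.sum_ite_eq', Finset.mem_univ, if_true, Dart.symm_toProd, Prod.snd_swap]

theorem Prev_mul_Nout_transpose : Prev G * (Nout G)ᵀ = (Nin G)ᵀ := by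
  ext d v
  simp only [Prev, Nin, Nout, mul_apply, transpose_apply, of_apply, ite_mul, one_mul, zero_mul,
    Finset.sum_ite_eq', Finset.mem_univ, if_true, Dart.symm_toProd, Prod.fst_swap]

theorem Nout_transpose_mul_Nin_sub_Prev_mul_Nout_transpose :
    ((Nout G)ᵀ * Nin G - Prev G) * (Nout G)ᵀ = (Nout G)ᵀ * G.adjMatrix ℝ - (Nin G)ᵀ := by
  rw [Matrix.sub_mul, Matrix.mul_assoc, Nin_mul_Nout_transpose, Prev_mul_Nout_transpose]

theorem Nout_transpose_mul_Nin_sub_Prev_mul_Nin_transpose_of_isRegularOfDegree {k : ℕ}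
    (hreg : G.IsRegularOfDegree k) :
    ((Nout G)ᵀ * Nin G - Prev G) * (Nin G)ᵀ = ((k : ℝ) - 1) • (Nout G)ᵀ := by
  rw [Matrix.sub_mul, Matrix.mul_assoc, Nin_mul_Nin_transpose_of_isRegularOfDegree G hreg,
    Prev_mul_Nin_transpose, Matrix.mul_smul, Matrix.mul_one, sub_smul, one_smul]

end Incidence

/-- If z is an eigenvector of A with eigenvalue λ and y = N_out^T z, then
S²y - λ S y + (k-1) y = 0 for S = N_out^T N_in - P. -/
theorem stmt9 (G : SimpleGraph V) [DecidableRel G.Adj] (k : ℕ)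
    (hreg : G.IsRegularOfDegree k) (lam : ℝ) (z : V → ℝ)
    (hz : (G.adjMatrix ℝ).mulVec z = lam • z)
    (S : Matrix G.Dart G.Dart ℝ) (hS : S = (Nout G)ᵀ * Nin G - Prev G)
    (y : G.Dart → ℝ) (hy : y = ((Nout G)ᵀ).mulVec z) :
    S.mulVec (S.mulVec y) - lam • S.mulVec y + ((k : ℝ) - 1) • y = 0 := by
  have hSy : S *ᵥ y = lam • y - (Nin G)ᵀ *ᵥ z := by
    rw [hy, hS, mulVec_mulVec, Nout_transpose_mul_Nin_sub_Prev_mul_Nout_transpose, sub_mulVec,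
      ← mulVec_mulVec, hz, mulVec_smul]
  have hS_Nin : S *ᵥ ((Nin G)ᵀ *ᵥ z) = ((k : ℝ) - 1) • y := by
    rw [hy, hS, mulVec_mulVec,
      Nout_transpose_mul_Nin_sub_Prev_mul_Nin_transpose_of_isRegularOfDegree G hreg, smul_mulVec]
  rw [hSy, mulVec_sub, mulVec_smul, hSy, hS_Nin]
  module
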